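/- For every edge midpoint e ∈ E, the point √5·e lies in M, the ℤ-span of E. -/

import Mathlib

noncomputable section

/-- The golden ratio `(1+√5)/2`. -/
def gold : ℝ := (1 + Real.sqrt 5) / 2

/-- A point of `ℝ³` (with the Euclidean norm) from its three coordinates. -/
def pt (x y z : ℝ) : EuclideanSpace ℝ (Fin 3) := (WithLp.equiv 2 (Fin 3 → ℝ)).symm ![x, y, z]

/-- The vertices `(0, ±1, ±φ), (±1, ±φ, 0), (±φ, 0, ±1)` of the regular icosahedron. -/
def icoVerts : Set (EuclideanSpace ℝ (Fin 3)) :=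
  {w | ∃ s t : ℝ, (s = 1 ∨ s = -1) ∧ (t = 1 ∨ t = -1) ∧
    (w = pt 0 s (t * gold) ∨ w = pt s (t * gold) 0 ∨ w = pt (t * gold) 0 s)}

/-- The set `E` of midpoints of edges of the icosahedron: the edges are the pairs of
vertices at distance 2. -/
def icoMid : Set (EuclideanSpace ℝ (Fin 3)) :=
  {e | ∃ u ∈ icoVerts, ∃ v ∈ icoVerts, ‖u - v‖ = 2 ∧ e = (2⁻¹ : ℝ) • (u + v)}

/-- `M`, the ℤ-span of the set of edge midpoints of the icosahedron. -/
def icoM : AddSubgroup (EuclideanSpace ℝ (Fin 3)) := AddSubgroup.closure icoMid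


lemma gold_sq' : gold ^ 2 = gold + 1 := by
  have h5 : Real.sqrt 5 ^ 2 = 5 := Real.sq_sqrt (by norm_num)
  unfold gold; nlinarith [h5]

lemma pt_add (a b c d e f : ℝ) : pt a b c + pt d e f = pt (a+d) (b+e) (c+f) := by
  ext i; fin_cases i <;> simp [pt]

lemma pt_smul (r a b c : ℝ) : r • pt a b c = pt (r*a) (r*b) (r*c) := by
  ext i; fin_cases i <;> simp [pt]

lemma pt_sub (a b c d e f : ℝ) : pt a b c - pt d e f = pt (a-d) (b-e) (c-f) := by
  ext i; fin_cases i <;> simp [pt]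

lemma pt_neg (a b c : ℝ) : -pt a b c = pt (-a) (-b) (-c) := by
  ext i; fin_cases i <;> simp [pt]

lemma pt_congr {a b c a' b' c' : ℝ} (h1 : a = a') (h2 : b = b') (h3 : c = c') :
    pt a b c = pt a' b' c' := by
  subst h1; subst h2; subst h3; rfl

lemma norm_pt (a b c : ℝ) : ‖pt a b c‖ = Real.sqrt (a^2+b^2+c^2) := by
  rw [EuclideanSpace.norm_eq]
  simp [pt, Fin.sum_univ_three]

/-- Membership criterion for midpoints. -/
lemma mem_mid {a b c d e f : ℝ} (hu : pt a b c ∈ icoVerts) (hv : pt d e f ∈ icoVerts)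
    (h : (a-d)^2+(b-e)^2+(c-f)^2 = 4) :
    pt ((a+d)/2) ((b+e)/2) ((c+f)/2) ∈ icoMid := by
  refine ⟨pt a b c, hu, pt d e f, hv, ?_, ?_⟩
  · rw [pt_sub, norm_pt, h]
    rw [show (4:ℝ) = 2^2 by norm_num, Real.sqrt_sq (by norm_num)]
  · rw [pt_add, pt_smul]; norm_num [div_eq_mul_inv, mul_comm]

-- vertex membership helpers
lemma vert1 {s t : ℝ} (hs : s = 1 ∨ s = -1) (ht : t = 1 ∨ t = -1) :
    pt 0 s (t * gold) ∈ icoVerts := ⟨s, t, hs, ht, Or.inl rfl⟩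
lemma vert2 {s t : ℝ} (hs : s = 1 ∨ s = -1) (ht : t = 1 ∨ t = -1) :
    pt s (t * gold) 0 ∈ icoVerts := ⟨s, t, hs, ht, Or.inr (Or.inl rfl)⟩
lemma vert3 {s t : ℝ} (hs : s = 1 ∨ s = -1) (ht : t = 1 ∨ t = -1) :
    pt (t * gold) 0 s ∈ icoVerts := ⟨s, t, hs, ht, Or.inr (Or.inr rfl)⟩

lemma one' : (1:ℝ) = 1 ∨ (1:ℝ) = -1 := Or.inl rfl
lemma neg_one' : (-1:ℝ) = 1 ∨ (-1:ℝ) = -1 := Or.inr rfl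

-- axis midpoints: pt (t*gold) 0 0 etc., for t = ±1
lemma midAx {t : ℝ} (ht : t = 1 ∨ t = -1) : pt (t*gold) 0 0 ∈ icoMid := by
  have h := mem_mid (vert3 one' ht) (vert3 neg_one' ht) (by ring)
  rw [show pt (t*gold) 0 0 = pt ((t*gold+t*gold)/2) ((0+0)/2) ((1 + -1)/2) from pt_congr (by ring) (by ring) (by ring)]
  exact h
lemma midAy {t : ℝ} (ht : t = 1 ∨ t = -1) : pt 0 (t*gold) 0 ∈ icoMid := by
  have h := mem_mid (vert2 one' ht) (vert2 neg_one' ht) (by ring)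
  rw [show pt 0 (t*gold) 0 = pt ((1 + -1)/2) ((t*gold+t*gold)/2) ((0+0)/2) from pt_congr (by ring) (by ring) (by ring)]
  exact h
lemma midAz {t : ℝ} (ht : t = 1 ∨ t = -1) : pt 0 0 (t*gold) ∈ icoMid := by
  have h := mem_mid (vert1 one' ht) (vert1 neg_one' ht) (by ring)
  rw [show pt 0 0 (t*gold) = pt ((0+0)/2) ((1 + -1)/2) ((t*gold+t*gold)/2) from pt_congr (by ring) (by ring) (by ring)]
  exact h

lemma hg : gold ^ 2 = gold + 1 := gold_sq'

-- unit vectors in icoM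
lemma ez_mem : pt 0 0 1 ∈ icoM := by
  -- m1: midpoint of (0,1,gold) and (gold,0,1)
  have m1 : pt ((0+1*gold)/2) ((1+0)/2) ((1*gold+1)/2) ∈ icoMid :=
    mem_mid (vert1 one' one') (vert3 one' one') (by nlinarith [hg])
  have m2 : pt ((0+(-1)*gold)/2) (((-1)+0)/2) ((1*gold+1)/2) ∈ icoMid :=
    mem_mid (vert1 neg_one' one') (vert3 one' neg_one') (by nlinarith [hg])
  have mz : pt 0 0 (1*gold) ∈ icoMid := midAz one'
  have key : pt 0 0 1 = pt ((0+1*gold)/2) ((1+0)/2) ((1*gold+1)/2)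
      + pt ((0+(-1)*gold)/2) (((-1)+0)/2) ((1*gold+1)/2) - pt 0 0 (1*gold) := by
    rw [pt_add, pt_sub]; exact pt_congr (by ring) (by ring) (by ring)
  rw [key]
  exact sub_mem (add_mem (AddSubgroup.subset_closure m1) (AddSubgroup.subset_closure m2))
    (AddSubgroup.subset_closure mz)

lemma ex_mem : pt 1 0 0 ∈ icoM := by
  -- m3: midpoint of (1,gold,0) and (gold,0,1); m4: midpoint of (1,-gold,0),(gold,0,-1)
  have m3 : pt ((1+1*gold)/2) ((1*gold+0)/2) ((0+1)/2) ∈ icoMid :=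
    mem_mid (vert2 one' one') (vert3 one' one') (by nlinarith [hg])
  have m4 : pt ((1+1*gold)/2) (((-1)*gold+0)/2) ((0+(-1))/2) ∈ icoMid :=
    mem_mid (vert2 one' neg_one') (vert3 neg_one' one') (by nlinarith [hg])
  have mx : pt (1*gold) 0 0 ∈ icoMid := midAx one'
  have key : pt 1 0 0 = pt ((1+1*gold)/2) ((1*gold+0)/2) ((0+1)/2)
      + pt ((1+1*gold)/2) (((-1)*gold+0)/2) ((0+(-1))/2) - pt (1*gold) 0 0 := by
    rw [pt_add, pt_sub]; exact pt_congr (by ring) (by ring) (by ring)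
  rw [key]
  exact sub_mem (add_mem (AddSubgroup.subset_closure m3) (AddSubgroup.subset_closure m4))
    (AddSubgroup.subset_closure mx)

lemma ey_mem : pt 0 1 0 ∈ icoM := by
  -- m5: midpoint of (0,1,gold),(1,gold,0); m6: midpoint of (0,1,-gold),(-1,gold,0)
  have m5 : pt ((0+1)/2) ((1+1*gold)/2) ((1*gold+0)/2) ∈ icoMid :=
    mem_mid (vert1 one' one') (vert2 one' one') (by nlinarith [hg])
  have m6 : pt ((0+(-1))/2) ((1+1*gold)/2) (((-1)*gold+0)/2) ∈ icoMid :=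
    mem_mid (vert1 one' neg_one') (vert2 neg_one' one') (by nlinarith [hg])
  have my : pt 0 (1*gold) 0 ∈ icoMid := midAy one'
  have key : pt 0 1 0 = pt ((0+1)/2) ((1+1*gold)/2) ((1*gold+0)/2)
      + pt ((0+(-1))/2) ((1+1*gold)/2) (((-1)*gold+0)/2) - pt 0 (1*gold) 0 := by
    rw [pt_add, pt_sub]; exact pt_congr (by ring) (by ring) (by ring)
  rw [key]
  exact sub_mem (add_mem (AddSubgroup.subset_closure m5) (AddSubgroup.subset_closure m6))
    (AddSubgroup.subset_closure my)

-- pt s*unit values in icoM for s = ±1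
lemma unitz_mem {t : ℝ} (ht : t = 1 ∨ t = -1) : pt 0 0 t ∈ icoM := by
  rcases ht with rfl | rfl
  · exact ez_mem
  · have : pt 0 0 (-1) = - pt 0 0 1 := by rw [pt_neg]; norm_num
    rw [this]; exact neg_mem ez_mem
lemma unitx_mem {t : ℝ} (ht : t = 1 ∨ t = -1) : pt t 0 0 ∈ icoM := by
  rcases ht with rfl | rfl
  · exact ex_mem
  · have : pt (-1) 0 0 = - pt 1 0 0 := by rw [pt_neg]; norm_num
    rw [this]; exact neg_mem ex_mem
lemma unity_mem {t : ℝ} (ht : t = 1 ∨ t = -1) : pt 0 t 0 ∈ icoM := by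
  rcases ht with rfl | rfl
  · exact ey_mem
  · have : pt 0 (-1) 0 = - pt 0 1 0 := by rw [pt_neg]; norm_num
    rw [this]; exact neg_mem ey_mem

/-- `φ·w ∈ M` for every vertex `w`. -/
lemma gold_smul_vert {w : EuclideanSpace ℝ (Fin 3)} (hw : w ∈ icoVerts) :
    gold • w ∈ icoM := by
  obtain ⟨s, t, hs, ht, h | h | h⟩ := hw <;> subst h
  · -- gold • (0, s, t*gold) = (0, s*gold, 0) + (0,0,t*gold) + (0,0,t)
    have key : gold • pt 0 s (t*gold) = pt 0 (s*gold) 0 + pt 0 0 (t*gold) + pt 0 0 t := by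
      rw [pt_smul, pt_add, pt_add]
      exact pt_congr (by ring) (by ring) (by linear_combination t * hg)
    rw [key]
    exact add_mem (add_mem (AddSubgroup.subset_closure (midAy hs))
      (AddSubgroup.subset_closure (midAz ht))) (unitz_mem ht)
  · have key : gold • pt s (t*gold) 0 = pt (s*gold) 0 0 + pt 0 (t*gold) 0 + pt 0 t 0 := by
      rw [pt_smul, pt_add, pt_add]
      exact pt_congr (by ring) (by linear_combination t * hg) (by ring)
    rw [key]
    exact add_mem (add_mem (AddSubgroup.subset_closure (midAx hs))
      (AddSubgroup.subset_closure (midAy ht))) (unity_mem ht)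
  · have key : gold • pt (t*gold) 0 s = pt (t*gold) 0 0 + pt t 0 0 + pt 0 0 (s*gold) := by
      rw [pt_smul, pt_add, pt_add]
      exact pt_congr (by linear_combination t * hg) (by ring) (by ring)
    rw [key]
    exact add_mem (add_mem (AddSubgroup.subset_closure (midAx ht)) (unitx_mem ht))
      (AddSubgroup.subset_closure (midAz hs))

/-- For every edge midpoint `e ∈ E`, the point `√5 · e` lies in `M`, the ℤ-span of `E`. -/
theorem sqrt5_smul_mid_mem_icoM : ∀ e ∈ icoMid, Real.sqrt 5 • e ∈ icoM := by
  rintro e ⟨u, hu, v, hv, hn, rfl⟩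
  have key : Real.sqrt 5 • ((2⁻¹ : ℝ) • (u + v))
      = gold • u + gold • v - (2⁻¹ : ℝ) • (u + v) := by
    rw [smul_smul]
    have h1 : Real.sqrt 5 * 2⁻¹ = gold - 2⁻¹ := by unfold gold; ring
    rw [h1]
    module
  rw [key]
  exact sub_mem (add_mem (gold_smul_vert hu) (gold_smul_vert hv))
    (AddSubgroup.subset_closure ⟨u, hu, v, hv, hn, rfl⟩)


end
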